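/- arXiv:2312.00718 — 5 statements merged into one kernel-verified Lean document; each statement's English description precedes it below -/
import Mathlib

section
/- Let α ∈ [0,1] and let p, q be probability mass functions on a finite set B with p(b), q(b) > 0 for all b. Define the normalized geometric mixture r(b) = p(b)^α q(b)^{1−α} / Σ_{b'} p(b')^α q(b')^{1−α}, and similarly s(b) = q(b)^α p(b)^{1−α} / Σ_{b'} q(b')^α p(b')^{1−α}. Then for every b ∈ B, r(b)·s(b) ≥ p(b)·q(b). -/
open Finset

lemma sum_geom_le_one {B : Type} [Fintype B] (α : ℝ)
    (hα0 : 0 ≤ α) (hα1 : α ≤ 1) (p q : B → ℝ)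
    (hp0 : ∀ b, 0 < p b) (hq0 : ∀ b, 0 < q b)
    (hp1 : ∑ b, p b = 1) (hq1 : ∑ b, q b = 1) :
    ∑ b, p b ^ α * q b ^ (1 - α) ≤ 1 := by
  calc ∑ b, p b ^ α * q b ^ (1 - α) ≤ ∑ b, (α * p b + (1 - α) * q b) := by
        apply Finset.sum_le_sum
        intro b _
        exact Real.geom_mean_le_arith_mean2_weighted hα0 (by linarith)
          (hp0 b).le (hq0 b).le (by ring)
    _ = 1 := by
        rw [Finset.sum_add_distrib, ← Finset.mul_sum, ← Finset.mul_sum, hp1, hq1]; ring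

theorem normalized_geom_mixture_product_ge {B : Type} [Fintype B] (α : ℝ)
    (hα0 : 0 ≤ α) (hα1 : α ≤ 1) (p q : B → ℝ)
    (hp0 : ∀ b, 0 < p b) (hq0 : ∀ b, 0 < q b)
    (hp1 : ∑ b, p b = 1) (hq1 : ∑ b, q b = 1) :
    ∀ b, p b * q b ≤
      (p b ^ α * q b ^ (1 - α) / ∑ b', p b' ^ α * q b' ^ (1 - α)) *
      (q b ^ α * p b ^ (1 - α) / ∑ b', q b' ^ α * p b' ^ (1 - α)) := by
  intro b
  have : Nonempty B := ⟨b⟩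
  set Z1 := ∑ b', p b' ^ α * q b' ^ (1 - α) with hZ1
  set Z2 := ∑ b', q b' ^ α * p b' ^ (1 - α) with hZ2
  have hZ1pos : 0 < Z1 := Finset.sum_pos (fun b' _ => mul_pos (Real.rpow_pos_of_pos (hp0 b') _) (Real.rpow_pos_of_pos (hq0 b') _)) Finset.univ_nonempty
  have hZ2pos : 0 < Z2 := Finset.sum_pos (fun b' _ => mul_pos (Real.rpow_pos_of_pos (hq0 b') _) (Real.rpow_pos_of_pos (hp0 b') _)) Finset.univ_nonempty
  have hZ1le : Z1 ≤ 1 := sum_geom_le_one α hα0 hα1 p q hp0 hq0 hp1 hq1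
  have hZ2le : Z2 ≤ 1 := sum_geom_le_one α hα0 hα1 q p hq0 hp0 hq1 hp1
  have hnum : (p b ^ α * q b ^ (1 - α)) * (q b ^ α * p b ^ (1 - α)) = p b * q b := by
    have hp := (hp0 b).le
    have hq := (hq0 b).le
    rw [show (p b ^ α * q b ^ (1 - α)) * (q b ^ α * p b ^ (1 - α))
      = (p b ^ α * p b ^ (1 - α)) * (q b ^ α * q b ^ (1 - α)) by ring,
      ← Real.rpow_add (hp0 b), ← Real.rpow_add (hq0 b)]
    simp
  rw [div_mul_div_comm, hnum, le_div_iff₀ (by positivity)]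
  have hpq : 0 < p b * q b := mul_pos (hp0 b) (hq0 b)
  nlinarith [mul_le_one₀ hZ1le hZ2pos.le hZ2le]
end

section
/- Energy-based variational lower bound on conditional mutual information: let (X, Y, B) be finite random variables with strictly positive joint distribution, and let h : X × Y × B → ℝ be any function. Then I(X; Y | B) ≥ E_{p(x,y,b)}[h(x,y,b)] − e^{−1}·E_{p(x)}E_{p(y,b)}[e^{h(x,y,b)}] − I(X; B), where the second expectation is over independent x ∼ p(x) and (y,b) ∼ p(y,b). -/
open Finset

/-- Conditional mutual information `I(A;C|D)` of a finite joint pmf `p`. -/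
noncomputable def cmi {A C D : Type} [Fintype A] [Fintype C] [Fintype D]
    (p : A → C → D → ℝ) : ℝ :=
  ∑ a, ∑ c, ∑ d, p a c d *
    Real.log ((∑ a', ∑ c', p a' c' d) * p a c d /
      ((∑ c', p a c' d) * (∑ a', p a' c d)))

/-- Mutual information `I(X;B)` extracted from the joint pmf `p` over `(X,Y,B)`. -/
noncomputable def miXB {X Y B : Type} [Fintype X] [Fintype Y] [Fintype B]
    (p : X → Y → B → ℝ) : ℝ :=
  ∑ x, ∑ b, (∑ y, p x y b) *
    Real.log ((∑ y, p x y b) / ((∑ y, ∑ b', p x y b') * (∑ x', ∑ y, p x' y b)))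

/-!
The chain rule `I(X;Y|B) + I(X;B) = I(X;Y,B)` reduces the claim to a bound for each `x` on
`∑_{y,b} p(x,y,b) log (p(x,y,b) / (p(x) p(y,b)))`, which is `p(x)` times a Kullback–Leibler
divergence. The Donsker–Varadhan (Gibbs) inequality bounds it below by
`∑_{y,b} p(x,y,b) h(x,y,b) - p(x) log Z(x)` with `Z(x) = ∑_{y,b} p(y,b) e^{h(x,y,b)}`,
and `log Z ≤ Z / e` linearises the log-partition function.
-/

open Real

theorem sub_le_mul_log_div {a b : ℝ} (ha : 0 < a) (hb : 0 < b) : a - b ≤ a * log (a / b) := by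
  have := one_sub_inv_le_log_of_pos (div_pos ha hb)
  rw [inv_div] at this
  calc a - b = a * (1 - b / a) := by field_simp
    _ ≤ a * log (a / b) := mul_le_mul_of_nonneg_left this ha.le

theorem log_le_inv_exp_one_mul {z : ℝ} (hz : 0 < z) : log z ≤ (exp 1)⁻¹ * z := by
  have := log_le_sub_one_of_pos (mul_pos (inv_pos.2 (exp_pos 1)) hz)
  rw [log_mul (inv_ne_zero (exp_pos 1).ne') hz.ne', log_inv, log_exp] at this
  linarith

theorem sum_mul_sub_mul_log_sum_mul_exp_le {ι : Type*} (s : Finset ι) {a r : ι → ℝ}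
    (ha : ∀ i ∈ s, 0 < a i) (hr : ∀ i ∈ s, 0 < r i) (h : ι → ℝ) :
    ∑ i ∈ s, a i * h i - (∑ i ∈ s, a i) * log (∑ i ∈ s, r i * exp (h i)) ≤
      ∑ i ∈ s, a i * log (a i / ((∑ j ∈ s, a j) * r i)) := by
  rcases s.eq_empty_or_nonempty with rfl | hs
  · simp
  set P := ∑ j ∈ s, a j
  set Z := ∑ i ∈ s, r i * exp (h i)
  have hP : 0 < P := sum_pos ha hs
  have hZ : 0 < Z := sum_pos (fun i hi => mul_pos (hr i hi) (exp_pos _)) hs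
  -- Gibbs's inequality against the tilted weights `P * r i * exp (h i) / Z`, whose total is `P`.
  have gibbs : ∑ i ∈ s, (a i - P * (r i * exp (h i)) / Z) ≤
      ∑ i ∈ s, a i * log (a i / (P * (r i * exp (h i)) / Z)) :=
    sum_le_sum fun i hi => sub_le_mul_log_div (ha i hi)
      (div_pos (mul_pos hP (mul_pos (hr i hi) (exp_pos _))) hZ)
  have total : ∑ i ∈ s, (a i - P * (r i * exp (h i)) / Z) = 0 := by
    rw [sum_sub_distrib, ← sum_div, ← mul_sum, mul_div_cancel_right₀ _ hZ.ne', sub_self]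
  have tilt : ∀ i ∈ s, a i * log (a i / (P * (r i * exp (h i)) / Z)) =
      a i * log (a i / (P * r i)) - a i * h i + a i * log Z := by
    intro i hi
    have hPr : 0 < P * r i := mul_pos hP (hr i hi)
    have harg : a i / (P * (r i * exp (h i)) / Z) = a i / (P * r i) * (Z / exp (h i)) := by
      field_simp
    rw [harg, log_mul (div_pos (ha i hi) hPr).ne' (div_pos hZ (exp_pos _)).ne',
      log_div hZ.ne' (exp_pos _).ne', log_exp]
    ring
  rw [total, sum_congr rfl tilt, sum_add_distrib, sum_sub_distrib, ← sum_mul] at gibbs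
  linarith

theorem sum_mul_sub_inv_exp_one_mul_sum_mul_exp_le {ι : Type*} (s : Finset ι) {a r : ι → ℝ}
    (ha : ∀ i ∈ s, 0 < a i) (hr : ∀ i ∈ s, 0 < r i) (h : ι → ℝ) :
    ∑ i ∈ s, a i * h i - (exp 1)⁻¹ * ((∑ i ∈ s, a i) * ∑ i ∈ s, r i * exp (h i)) ≤
      ∑ i ∈ s, a i * log (a i / ((∑ j ∈ s, a j) * r i)) := by
  rcases s.eq_empty_or_nonempty with rfl | hs
  · simp
  have hP : 0 < ∑ i ∈ s, a i := sum_pos ha hs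
  have hZ : 0 < ∑ i ∈ s, r i * exp (h i) := sum_pos (fun i hi => mul_pos (hr i hi) (exp_pos _)) hs
  have := mul_le_mul_of_nonneg_left (log_le_inv_exp_one_mul hZ) hP.le
  linarith [sum_mul_sub_mul_log_sum_mul_exp_le s ha hr h]

theorem cmi_add_miXB {X Y B : Type} [Fintype X] [Fintype Y] [Fintype B]
    (p : X → Y → B → ℝ) (hp : ∀ x y b, 0 < p x y b) :
    cmi p + miXB p = ∑ x, ∑ y, ∑ b, p x y b *
      log (p x y b / ((∑ y', ∑ b', p x y' b') * ∑ x', p x' y b)) := by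
  have miXB_eq : miXB p = ∑ x, ∑ y, ∑ b, p x y b *
      log ((∑ y', p x y' b) / ((∑ y', ∑ b', p x y' b') * ∑ x', ∑ y', p x' y' b)) := by
    refine sum_congr rfl fun x _ => ?_
    simp_rw [sum_mul]
    exact sum_comm
  rw [miXB_eq, cmi]
  simp only [← sum_add_distrib, ← mul_add]
  refine sum_congr rfl fun x _ => sum_congr rfl fun y _ => sum_congr rfl fun b _ => ?_
  have hX : 0 < ∑ y', ∑ b', p x y' b' :=
    sum_pos (fun y' _ => sum_pos (fun b' _ => hp x y' b') ⟨b, mem_univ _⟩) ⟨y, mem_univ _⟩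
  have hXB : 0 < ∑ y', p x y' b := sum_pos (fun y' _ => hp x y' b) ⟨y, mem_univ _⟩
  have hYB : 0 < ∑ x', p x' y b := sum_pos (fun x' _ => hp x' y b) ⟨x, mem_univ _⟩
  have hB : 0 < ∑ x', ∑ y', p x' y' b :=
    sum_pos (fun x' _ => sum_pos (fun y' _ => hp x' y' b) ⟨y, mem_univ _⟩) ⟨x, mem_univ _⟩
  have hxyb := hp x y b
  rw [← log_mul (by positivity) (by positivity)]
  congr 2
  field_simp

theorem energy_based_variational_lower_bound_general {X Y B : Type}
    [Fintype X] [Fintype Y] [Fintype B]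
    (p : X → Y → B → ℝ) (hp : ∀ x y b, 0 < p x y b)
    (h : X → Y → B → ℝ) :
    (∑ x, ∑ y, ∑ b, p x y b * h x y b) -
      (Real.exp 1)⁻¹ *
        (∑ x, (∑ y, ∑ b, p x y b) *
          (∑ y, ∑ b, (∑ x', p x' y b) * Real.exp (h x y b))) -
      miXB p ≤ cmi p := by
  have per_x : ∀ x, ∑ y, ∑ b, p x y b * h x y b -
      (exp 1)⁻¹ * ((∑ y, ∑ b, p x y b) * ∑ y, ∑ b, (∑ x', p x' y b) * exp (h x y b)) ≤
      ∑ y, ∑ b, p x y b * log (p x y b / ((∑ y', ∑ b', p x y' b') * ∑ x', p x' y b)) := by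
    intro x
    have := sum_mul_sub_inv_exp_one_mul_sum_mul_exp_le (univ : Finset (Y × B))
      (a := fun yb => p x yb.1 yb.2) (r := fun yb => ∑ x', p x' yb.1 yb.2)
      (fun yb _ => hp x yb.1 yb.2)
      (fun yb _ => sum_pos (fun x' _ => hp x' yb.1 yb.2) ⟨x, mem_univ _⟩) (fun yb => h x yb.1 yb.2)
    simpa only [Fintype.sum_prod_type] using this
  have summed := sum_le_sum fun x (_ : x ∈ univ) => per_x x
  rw [sum_sub_distrib, ← mul_sum, ← cmi_add_miXB p hp] at summed
  linarith

theorem energy_based_variational_lower_bound {X Y B : Type}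
    [Fintype X] [Fintype Y] [Fintype B]
    (p : X → Y → B → ℝ) (hp : ∀ x y b, 0 < p x y b)
    (hp1 : ∑ x, ∑ y, ∑ b, p x y b = 1)
    (h : X → Y → B → ℝ) :
    (∑ x, ∑ y, ∑ b, p x y b * h x y b) -
      (Real.exp 1)⁻¹ *
        (∑ x, (∑ y, ∑ b, p x y b) *
          (∑ y, ∑ b, (∑ x', p x' y b) * Real.exp (h x y b))) -
      miXB p ≤ cmi p :=
  energy_based_variational_lower_bound_general p hp h
end

section
/- Normalization of the reweighted partition expectation: let (Y, B) and X be finite random variables, f : X × Y → ℝ any function, and w : Y × B × X → (0,∞) any positive weight function. For K ≥ 1, draw (y¹,b¹) ∼ p(y,b) and x¹,…,x^K i.i.d. ∼ p(x). Then E[ (e^{f(x¹,y¹)}·w(y¹,b¹,x¹)) / ( (1/K)·Σ_{i=1}^K e^{f(x^i,y¹)}·w(y¹,b¹,x^i) ) ] = 1. -/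
open Finset

theorem reweighted_partition_normalization {X Y B : Type}
    [Fintype X] [Fintype Y] [Fintype B]
    (pX : X → ℝ) (hpX0 : ∀ x, 0 ≤ pX x) (hpX1 : ∑ x, pX x = 1)
    (pYB : Y → B → ℝ) (hpYB0 : ∀ y b, 0 ≤ pYB y b) (hpYB1 : ∑ y, ∑ b, pYB y b = 1)
    (f : X → Y → ℝ) (w : Y → B → X → ℝ) (hw : ∀ y b x, 0 < w y b x)
    (K : ℕ) (hK : 1 ≤ K) :
    ∑ y, ∑ b, pYB y b *
      (∑ xs : Fin K → X, (∏ i, pX (xs i)) *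
        (Real.exp (f (xs ⟨0, hK⟩) y) * w y b (xs ⟨0, hK⟩) /
          ((1 / (K : ℝ)) * ∑ i, Real.exp (f (xs i) y) * w y b (xs i)))) = 1 := by
  classical
  have hKpos : (0:ℝ) < K := by exact_mod_cast Nat.lt_of_lt_of_le Nat.zero_lt_one hK
  have hsum1 : ∑ xs : Fin K → X, ∏ i, pX (xs i) = 1 := by
    have := Finset.prod_univ_sum (fun _ : Fin K => (Finset.univ : Finset X))
      (fun _ x => pX x)
    simp only [hpX1, Finset.prod_const_one, one_pow] at this
    rw [Fintype.piFinset_univ] at this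
    simpa using this.symm
  have key : ∀ (y : Y) (b : B),
      ∑ xs : Fin K → X, (∏ i, pX (xs i)) *
        (Real.exp (f (xs ⟨0, hK⟩) y) * w y b (xs ⟨0, hK⟩) /
          ((1 / (K : ℝ)) * ∑ i, Real.exp (f (xs i) y) * w y b (xs i))) = 1 := by
    intro y b
    set g : X → ℝ := fun x => Real.exp (f x y) * w y b x with hg
    have hgpos : ∀ x, 0 < g x := fun x => mul_pos (Real.exp_pos _) (hw y b x)
    set T : ℝ := ∑ xs : Fin K → X, (∏ i, pX (xs i)) *
        (g (xs ⟨0, hK⟩) / ((1 / (K : ℝ)) * ∑ i, g (xs i))) with hT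
    have exch : ∀ j : Fin K,
        ∑ xs : Fin K → X, (∏ i, pX (xs i)) *
          (g (xs j) / ((1 / (K : ℝ)) * ∑ i, g (xs i))) = T := by
      intro j
      set σ := Equiv.swap (⟨0, hK⟩ : Fin K) j with hσ
      refine Fintype.sum_equiv (Equiv.arrowCongr σ.symm (Equiv.refl X)) _ _ ?_
      intro xs
      have happ : ∀ i, (Equiv.arrowCongr σ.symm (Equiv.refl X)) xs i = xs (σ i) := by
        intro i; rfl
      simp only [happ]
      have h0 : σ (⟨0, hK⟩ : Fin K) = j := Equiv.swap_apply_left _ _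
      rw [h0]
      congr 1
      · exact (Equiv.prod_comp σ (fun i => pX (xs i))).symm
      · congr 2
        exact (Equiv.sum_comp σ (fun i => g (xs i))).symm
    have hKT : (K : ℝ) * T = (K : ℝ) * 1 := by
      calc (K : ℝ) * T = ∑ _j : Fin K, T := by
            simp [Finset.sum_const, nsmul_eq_mul]
        _ = ∑ j : Fin K, ∑ xs : Fin K → X, (∏ i, pX (xs i)) *
            (g (xs j) / ((1 / (K : ℝ)) * ∑ i, g (xs i))) :=
            Finset.sum_congr rfl fun j _ => (exch j).symm
        _ = ∑ xs : Fin K → X, (∏ i, pX (xs i)) *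
            ((∑ j, g (xs j)) / ((1 / (K : ℝ)) * ∑ i, g (xs i))) := by
            rw [Finset.sum_comm]
            refine Finset.sum_congr rfl fun xs _ => ?_
            rw [← Finset.mul_sum, ← Finset.sum_div]
        _ = ∑ xs : Fin K → X, (∏ i, pX (xs i)) * (K : ℝ) := by
            refine Finset.sum_congr rfl fun xs _ => ?_
            haveI : Nonempty (Fin K) := ⟨⟨0, hK⟩⟩
            have hS : (0:ℝ) < ∑ i, g (xs i) := by
              refine Finset.sum_pos (fun i _ => hgpos _) ?_
              exact Finset.univ_nonempty
            congr 1
            field_simp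
        _ = (K : ℝ) * 1 := by
            rw [← Finset.sum_mul, hsum1, one_mul, mul_one]
    have := mul_left_cancel₀ (ne_of_gt hKpos) hKT
    simpa [hT, hg] using this
  calc ∑ y, ∑ b, pYB y b *
      (∑ xs : Fin K → X, (∏ i, pX (xs i)) *
        (Real.exp (f (xs ⟨0, hK⟩) y) * w y b (xs ⟨0, hK⟩) /
          ((1 / (K : ℝ)) * ∑ i, Real.exp (f (xs i) y) * w y b (xs i))))
      = ∑ y, ∑ b, pYB y b * 1 := by
        refine Finset.sum_congr rfl fun y _ => Finset.sum_congr rfl fun b _ => ?_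
        rw [key y b]
    _ = 1 := by simpa using hpYB1
end

section
/- Multi-sample variational lower bound (one direction of Proposition 2): let (X, Y, B) be finite random variables with strictly positive joint distribution, f : X × Y → ℝ any critic, and ĝ : B × Y × X → (0,1] any positive variational conditional distribution. For K ≥ 1, draw (x¹,y¹,b¹) ∼ p(x,y,b) and x²,…,x^K i.i.d. ∼ p(x). Then I(X; Y | B) ≥ E[ log( (p(b¹)/p(b¹|x¹)) · e^{f(x¹,y¹)}·ĝ(b¹|y¹,x¹) / ( (1/K)·Σ_{i=1}^K e^{f(x^i,y¹)}·ĝ(b¹|y¹,x^i) ) ) ]. -/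
open Finset

lemma sym_eq {X : Type} [Fintype X] (n : ℕ) (w g : X → ℝ) (j k : Fin n) :
    ∑ v : Fin n → X, (∏ i, w (v i)) * (g (v j) / ∑ i, g (v i))
      = ∑ v : Fin n → X, (∏ i, w (v i)) * (g (v k) / ∑ i, g (v i)) := by
  apply Fintype.sum_equiv (Equiv.arrowCongr (Equiv.swap j k) (Equiv.refl X))
  intro v
  simp only [Equiv.arrowCongr_apply, Equiv.refl_symm, Equiv.coe_refl, Function.comp]
  rw [← Equiv.prod_comp (Equiv.swap j k) (fun i => w (v i)),
      ← Equiv.sum_comp (Equiv.swap j k) (fun i => g (v i))]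
  simp [Equiv.swap_apply_right]

lemma key {X : Type} [Fintype X] [Nonempty X] (m : ℕ) (w g : X → ℝ)
    (hw1 : ∑ x, w x = 1) (hg : ∀ x, 0 < g x) :
    ∑ v : Fin (m+1) → X, (∏ i, w (v i)) * (g (v 0) / ∑ i, g (v i))
      = 1 / (m+1 : ℝ) := by
  have hd : ∀ v : Fin (m+1) → X, (0:ℝ) < ∑ i, g (v i) := fun v =>
    Finset.sum_pos (fun i _ => hg _) ⟨0, Finset.mem_univ 0⟩
  have hn : ((m:ℝ)+1) ≠ 0 := by positivity
  have h1 : ((m:ℝ)+1) * (∑ v : Fin (m+1) → X, (∏ i, w (v i)) * (g (v 0) / ∑ i, g (v i))) = 1 := by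
    calc ((m:ℝ)+1) * (∑ v : Fin (m+1) → X, (∏ i, w (v i)) * (g (v 0) / ∑ i, g (v i)))
        = ∑ j : Fin (m+1), ∑ v : Fin (m+1) → X, (∏ i, w (v i)) * (g (v j) / ∑ i, g (v i)) := by
          rw [Finset.sum_congr rfl (fun j _ => sym_eq (m+1) w g j 0)]
          simp [Finset.sum_const, nsmul_eq_mul]
      _ = ∑ v : Fin (m+1) → X, ∏ i, w (v i) := by
          rw [Finset.sum_comm]
          refine Finset.sum_congr rfl (fun v _ => ?_)
          rw [← Finset.mul_sum, ← Finset.sum_div, div_self (hd v).ne', mul_one]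
      _ = (∑ x, w x) ^ (m+1) := (Fintype.sum_pow w (m+1)).symm
      _ = 1 := by rw [hw1, one_pow]
  field_simp at h1 ⊢
  linarith

lemma key2 {X : Type} [Fintype X] [Nonempty X] (m : ℕ) (w g : X → ℝ)
    (hw1 : ∑ x, w x = 1) (hg : ∀ x, 0 < g x) :
    ∑ x1 : X, ∑ xs : Fin m → X,
        (w x1 * ∏ i, w (xs i)) * (g x1 / (g x1 + ∑ i, g (xs i)))
      = 1 / (m+1 : ℝ) := by
  rw [← key m w g hw1 hg]
  rw [show (∑ x1 : X, ∑ xs : Fin m → X,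
        (w x1 * ∏ i, w (xs i)) * (g x1 / (g x1 + ∑ i, g (xs i))))
      = ∑ pr : X × (Fin m → X),
        (w pr.1 * ∏ i, w (pr.2 i)) * (g pr.1 / (g pr.1 + ∑ i, g (pr.2 i)))
    from (Fintype.sum_prod_type (f := fun pr : X × (Fin m → X) =>
        (w pr.1 * ∏ i, w (pr.2 i)) * (g pr.1 / (g pr.1 + ∑ i, g (pr.2 i))))).symm]
  refine Fintype.sum_equiv (Fin.consEquiv fun _ => X) _ _ ?_
  rintro ⟨x, u⟩
  simp only [Fin.consEquiv_apply, Fin.prod_univ_succ, Fin.sum_univ_succ,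
    Fin.cons_zero, Fin.cons_succ]

lemma log_bound {a c : ℝ} (ha : 0 < a) (hc : 0 < c) :
    Real.log a ≤ Real.log c + (a / c - 1) := by
  have h := Real.log_le_sub_one_of_pos (div_pos ha hc)
  rw [Real.log_div ha.ne' hc.ne'] at h
  linarith

lemma alg_id {pv q pxb pyb wv gg S P r : ℝ} (hp : 0 < pv) (hq : 0 < q) (hxb : 0 < pxb)
    (hyb : 0 < pyb) (hw : 0 < wv) (hgg : 0 < gg) (hS : 0 < S) (hr : 0 < r) :
    pv * (P * ((q / (pxb / wv)) * gg / ((1/r) * S) / (q * pv / (pxb * pyb))))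
      = pyb * (r * ((wv * P) * (gg / S))) := by
  field_simp


theorem multisample_variational_lower_bound {X Y B : Type}
    [Fintype X] [Fintype Y] [Fintype B]
    (p : X → Y → B → ℝ) (hp : ∀ x y b, 0 < p x y b)
    (hp1 : ∑ x, ∑ y, ∑ b, p x y b = 1)
    (f : X → Y → ℝ) (ghat : B → Y → X → ℝ)
    (hg0 : ∀ b y x, 0 < ghat b y x) (hg1 : ∀ b y x, ghat b y x ≤ 1)
    (K : ℕ) (hK : 1 ≤ K) :
    ∑ x1, ∑ y1, ∑ b1, p x1 y1 b1 *
      (∑ xs : Fin (K - 1) → X,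
        (∏ i, (∑ y, ∑ b, p (xs i) y b)) *
        Real.log
          (((∑ x, ∑ y, p x y b1) /
              ((∑ y, p x1 y b1) / (∑ y, ∑ b, p x1 y b))) *
            (Real.exp (f x1 y1) * ghat b1 y1 x1) /
            ((1 / (K : ℝ)) *
              (Real.exp (f x1 y1) * ghat b1 y1 x1 +
                ∑ i, Real.exp (f (xs i) y1) * ghat b1 y1 (xs i))))) ≤
      cmi p := by
  have hKm : K = (K - 1) + 1 := (Nat.succ_pred_eq_of_pos hK).symm
  set m := K - 1 with hm
  simp only [show (K:ℝ) = (m:ℝ) + 1 from by rw [hKm]; push_cast; ring]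
  have hX : Nonempty X := by
    by_contra h; rw [not_nonempty_iff] at h; simp at hp1
  have hY : Nonempty Y := by
    by_contra h; rw [not_nonempty_iff] at h; simp at hp1
  have hB : Nonempty B := by
    by_contra h; rw [not_nonempty_iff] at h; simp at hp1
  have hw : ∀ x, 0 < ∑ y, ∑ b, p x y b := fun x =>
    Finset.sum_pos (fun y _ => Finset.sum_pos (fun b _ => hp x y b) univ_nonempty) univ_nonempty
  have hq : ∀ b, 0 < ∑ x, ∑ y, p x y b := fun b =>
    Finset.sum_pos (fun x _ => Finset.sum_pos (fun y _ => hp x y b) univ_nonempty) univ_nonempty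
  have hxb : ∀ x b, 0 < ∑ y, p x y b := fun x b =>
    Finset.sum_pos (fun y _ => hp x y b) univ_nonempty
  have hyb : ∀ y b, 0 < ∑ x, p x y b := fun y b =>
    Finset.sum_pos (fun x _ => hp x y b) univ_nonempty
  have hgg : ∀ b y x, 0 < Real.exp (f x y) * ghat b y x := fun b y x =>
    mul_pos (Real.exp_pos _) (hg0 b y x)
  have hS : ∀ (y1 : Y) (b1 : B) (x1 : X) (xs : Fin m → X),
      0 < (Real.exp (f x1 y1) * ghat b1 y1 x1 +
            ∑ i, Real.exp (f (xs i) y1) * ghat b1 y1 (xs i)) := fun y1 b1 x1 xs =>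
    add_pos_of_pos_of_nonneg (hgg b1 y1 x1)
      (Finset.sum_nonneg fun i _ => (hgg b1 y1 (xs i)).le)
  have hr : (0:ℝ) < (m:ℝ) + 1 := by positivity
  have hprod1 : ∑ xs : Fin m → X, ∏ i, (∑ y, ∑ b, p (xs i) y b) = 1 := by
    rw [← Fintype.sum_pow (fun x => ∑ y, ∑ b, p x y b) m, hp1, one_pow]
  have hA : ∀ (x1 : X) (y1 : Y) (b1 : B) (xs : Fin m → X),
      0 < (∑ x, ∑ y, p x y b1) / ((∑ y, p x1 y b1) / (∑ y, ∑ b, p x1 y b)) *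
          (Real.exp (f x1 y1) * ghat b1 y1 x1) /
          (1 / ((m:ℝ) + 1) * (Real.exp (f x1 y1) * ghat b1 y1 x1 +
            ∑ i, Real.exp (f (xs i) y1) * ghat b1 y1 (xs i))) := fun x1 y1 b1 xs =>
    div_pos (mul_pos (div_pos (hq b1) (div_pos (hxb x1 b1) (hw x1))) (hgg b1 y1 x1))
      (mul_pos (by positivity) (hS y1 b1 x1 xs))
  have hC : ∀ (x1 : X) (y1 : Y) (b1 : B),
      0 < (∑ x, ∑ y, p x y b1) * p x1 y1 b1 / ((∑ y, p x1 y b1) * (∑ x, p x y1 b1)) := fun x1 y1 b1 =>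
    div_pos (mul_pos (hq b1) (hp x1 y1 b1)) (mul_pos (hxb x1 b1) (hyb y1 b1))
  have swap1 : ∀ (G : X → Y → B → ℝ),
      (∑ x1, ∑ y1, ∑ b1, G x1 y1 b1) = ∑ y1, ∑ b1, ∑ x1, G x1 y1 b1 := by
    intro G
    rw [Finset.sum_comm]
    exact Finset.sum_congr rfl fun y1 _ => Finset.sum_comm
  have E2 : ∑ x1, ∑ y1, ∑ b1, p x1 y1 b1 *
      ∑ xs : Fin m → X, (∏ i, ∑ y, ∑ b, p (xs i) y b) *
        ((∑ x, ∑ y, p x y b1) / ((∑ y, p x1 y b1) / (∑ y, ∑ b, p x1 y b)) *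
          (Real.exp (f x1 y1) * ghat b1 y1 x1) /
          (1 / ((m:ℝ) + 1) * (Real.exp (f x1 y1) * ghat b1 y1 x1 +
            ∑ i, Real.exp (f (xs i) y1) * ghat b1 y1 (xs i))) /
          ((∑ x, ∑ y, p x y b1) * p x1 y1 b1 / ((∑ y, p x1 y b1) * (∑ x, p x y1 b1)))) = 1 := by
    have hterm : ∀ (y1 : Y) (b1 : B) (x1 : X),
        (p x1 y1 b1 *
          ∑ xs : Fin m → X, (∏ i, ∑ y, ∑ b, p (xs i) y b) *
            ((∑ x, ∑ y, p x y b1) / ((∑ y, p x1 y b1) / (∑ y, ∑ b, p x1 y b)) *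
          (Real.exp (f x1 y1) * ghat b1 y1 x1) /
          (1 / ((m:ℝ) + 1) * (Real.exp (f x1 y1) * ghat b1 y1 x1 +
            ∑ i, Real.exp (f (xs i) y1) * ghat b1 y1 (xs i))) /
              ((∑ x, ∑ y, p x y b1) * p x1 y1 b1 / ((∑ y, p x1 y b1) * (∑ x, p x y1 b1)))))
          = (∑ x, p x y1 b1) * (((m:ℝ) + 1) *
              ∑ xs : Fin m → X,
                ((∑ y, ∑ b, p x1 y b) * (∏ i, ∑ y, ∑ b, p (xs i) y b)) *
                  ((Real.exp (f x1 y1) * ghat b1 y1 x1) /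
                    (Real.exp (f x1 y1) * ghat b1 y1 x1 +
            ∑ i, Real.exp (f (xs i) y1) * ghat b1 y1 (xs i)))) := by
      intro y1 b1 x1
      rw [Finset.mul_sum]
      rw [Finset.sum_congr rfl fun xs _ =>
        alg_id (hp x1 y1 b1) (hq b1) (hxb x1 b1) (hyb y1 b1) (hw x1) (hgg b1 y1 x1)
          (hS y1 b1 x1 xs) hr]
      rw [← Finset.mul_sum, ← Finset.mul_sum]
    rw [swap1]
    have hin : ∀ (y1 : Y) (b1 : B),
        (∑ x1, p x1 y1 b1 *
          ∑ xs : Fin m → X, (∏ i, ∑ y, ∑ b, p (xs i) y b) *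
            ((∑ x, ∑ y, p x y b1) / ((∑ y, p x1 y b1) / (∑ y, ∑ b, p x1 y b)) *
          (Real.exp (f x1 y1) * ghat b1 y1 x1) /
          (1 / ((m:ℝ) + 1) * (Real.exp (f x1 y1) * ghat b1 y1 x1 +
            ∑ i, Real.exp (f (xs i) y1) * ghat b1 y1 (xs i))) /
              ((∑ x, ∑ y, p x y b1) * p x1 y1 b1 / ((∑ y, p x1 y b1) * (∑ x, p x y1 b1))))) = ∑ x, p x y1 b1 := by
      intro y1 b1
      rw [Finset.sum_congr rfl fun x1 _ => hterm y1 b1 x1, ← Finset.mul_sum, ← Finset.mul_sum]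
      have hkey : (∑ x1 : X, ∑ xs : Fin m → X,
          ((∑ y, ∑ b, p x1 y b) * (∏ i, ∑ y, ∑ b, p (xs i) y b)) *
            ((Real.exp (f x1 y1) * ghat b1 y1 x1) /
              (Real.exp (f x1 y1) * ghat b1 y1 x1 +
            ∑ i, Real.exp (f (xs i) y1) * ghat b1 y1 (xs i)))) = 1 / ((m:ℝ) + 1) :=
        key2 m (fun x => ∑ y, ∑ b, p x y b) (fun x => Real.exp (f x y1) * ghat b1 y1 x)
          hp1 (fun x => hgg b1 y1 x)
      rw [hkey, mul_one_div_cancel hr.ne', mul_one]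
    rw [Finset.sum_congr rfl fun y1 _ => Finset.sum_congr rfl fun b1 _ => hin y1 b1,
      ← swap1 p, hp1]
  have step2 : (∑ x1, ∑ y1, ∑ b1, p x1 y1 b1 *
      ∑ xs : Fin m → X, (∏ i, ∑ y, ∑ b, p (xs i) y b) *
        (Real.log ((∑ x, ∑ y, p x y b1) * p x1 y1 b1 / ((∑ y, p x1 y b1) * (∑ x, p x y1 b1))) +
          ((∑ x, ∑ y, p x y b1) / ((∑ y, p x1 y b1) / (∑ y, ∑ b, p x1 y b)) *
          (Real.exp (f x1 y1) * ghat b1 y1 x1) /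
          (1 / ((m:ℝ) + 1) * (Real.exp (f x1 y1) * ghat b1 y1 x1 +
            ∑ i, Real.exp (f (xs i) y1) * ghat b1 y1 (xs i))) /
            ((∑ x, ∑ y, p x y b1) * p x1 y1 b1 / ((∑ y, p x1 y b1) * (∑ x, p x y1 b1))) - 1))) = cmi p := by
    have hinner : ∀ (x1 : X) (y1 : Y) (b1 : B),
        (∑ xs : Fin m → X, (∏ i, ∑ y, ∑ b, p (xs i) y b) *
          (Real.log ((∑ x, ∑ y, p x y b1) * p x1 y1 b1 / ((∑ y, p x1 y b1) * (∑ x, p x y1 b1))) +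
            ((∑ x, ∑ y, p x y b1) / ((∑ y, p x1 y b1) / (∑ y, ∑ b, p x1 y b)) *
          (Real.exp (f x1 y1) * ghat b1 y1 x1) /
          (1 / ((m:ℝ) + 1) * (Real.exp (f x1 y1) * ghat b1 y1 x1 +
            ∑ i, Real.exp (f (xs i) y1) * ghat b1 y1 (xs i))) /
              ((∑ x, ∑ y, p x y b1) * p x1 y1 b1 / ((∑ y, p x1 y b1) * (∑ x, p x y1 b1))) - 1)))
        = Real.log ((∑ x, ∑ y, p x y b1) * p x1 y1 b1 / ((∑ y, p x1 y b1) * (∑ x, p x y1 b1))) +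
          ((∑ xs : Fin m → X, (∏ i, ∑ y, ∑ b, p (xs i) y b) *
            ((∑ x, ∑ y, p x y b1) / ((∑ y, p x1 y b1) / (∑ y, ∑ b, p x1 y b)) *
          (Real.exp (f x1 y1) * ghat b1 y1 x1) /
          (1 / ((m:ℝ) + 1) * (Real.exp (f x1 y1) * ghat b1 y1 x1 +
            ∑ i, Real.exp (f (xs i) y1) * ghat b1 y1 (xs i))) /
              ((∑ x, ∑ y, p x y b1) * p x1 y1 b1 / ((∑ y, p x1 y b1) * (∑ x, p x y1 b1))))) - 1) := by
      intro x1 y1 b1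
      simp only [mul_add, mul_sub, mul_one]
      rw [Finset.sum_add_distrib, Finset.sum_sub_distrib, ← Finset.sum_mul, hprod1, one_mul]
    simp only [hinner]
    have expand : ∀ (a b c : ℝ), a * (b + (c - 1)) = a * b + (a * c - a) := by
      intro a b c; ring
    simp only [expand]
    simp only [Finset.sum_add_distrib, Finset.sum_sub_distrib]
    rw [E2, hp1]
    simp [cmi]
  rw [← step2]
  refine Finset.sum_le_sum fun x1 _ => Finset.sum_le_sum fun y1 _ =>
    Finset.sum_le_sum fun b1 _ => ?_
  refine mul_le_mul_of_nonneg_left (Finset.sum_le_sum fun xs _ => ?_) (hp x1 y1 b1).le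
  exact mul_le_mul_of_nonneg_left (log_bound (hA x1 y1 b1 xs) (hC x1 y1 b1))
    (Finset.prod_nonneg fun i _ => (hw (xs i)).le)
end

section
/- InfoNCE-type bound on mutual information (unconditional special case): let (X, Y) be finite random variables with strictly positive joint distribution and f : X × Y → ℝ any function. For K ≥ 1, with (x¹,y¹) ∼ p(x,y) and x²,…,x^K i.i.d. ∼ p(x), I(X; Y) ≥ E[ log( e^{f(x¹,y¹)} / ( (1/K)·Σ_{i=1}^K e^{f(x^i,y¹)} ) ) ]. -/
/-!
Write `A = e^{f(x¹,y)} / ((1/K) Σᵢ e^{f(xⁱ,y)})` for the critic. Applying `log a ≤ log b + a/b - 1`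
with `b = p(x,y) / (p(x) p(y))` pointwise and averaging gives the Nguyen–Wainwright–Jordan bound
`E_p[log A] ≤ I(X;Y) + E_{p(x)p(y)}[A] - 1`, valid for every positive critic. For the InfoNCE
critic the last expectation is exactly `1`: when `x¹, …, x^K` are i.i.d. the `K` ratios
`e^{f(xⁱ,y)} / Σⱼ e^{f(xʲ,y)}` have the same mean and sum to `1`.
-/

open Finset

noncomputable def mutualInfo {X Y : Type*} [Fintype X] [Fintype Y] (p : X → Y → ℝ) : ℝ :=
  ∑ x, ∑ y, p x y * Real.log (p x y / ((∑ y', p x y') * (∑ x', p x' y)))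

theorem Real.log_le_log_add_div_sub_one {a b : ℝ} (ha : 0 < a) (hb : 0 < b) :
    Real.log a ≤ Real.log b + a / b - 1 := by
  have := Real.log_le_sub_one_of_pos (div_pos ha hb)
  rw [Real.log_div ha.ne' hb.ne'] at this
  linarith

theorem sum_mul_log_le_log_add_div_sub_one {ι : Type*} [Fintype ι] {W a : ι → ℝ}
    (hW0 : ∀ i, 0 ≤ W i) (hW1 : ∑ i, W i = 1) (ha : ∀ i, 0 < a i) {b : ℝ} (hb : 0 < b) :
    ∑ i, W i * Real.log (a i) ≤ Real.log b + (∑ i, W i * a i) / b - 1 :=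
  calc ∑ i, W i * Real.log (a i)
      ≤ ∑ i, W i * (Real.log b + a i / b - 1) :=
        sum_le_sum fun i _ => mul_le_mul_of_nonneg_left
          (Real.log_le_log_add_div_sub_one (ha i) hb) (hW0 i)
    _ = Real.log b + (∑ i, W i * a i) / b - 1 := by
        simp only [mul_sub, mul_add, sum_sub_distrib, sum_add_distrib, ← sum_mul, hW1,
          sum_div, mul_div_assoc, mul_one, one_mul]

theorem sum_mul_sum_mul_log_le_mutualInfo_add {X Y ι : Type*} [Fintype X] [Fintype Y]
    [Fintype ι] {p : X → Y → ℝ} (hp : ∀ x y, 0 < p x y) (hp1 : ∑ x, ∑ y, p x y = 1)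
    {W : ι → ℝ} (hW0 : ∀ i, 0 ≤ W i) (hW1 : ∑ i, W i = 1)
    {A : X → Y → ι → ℝ} (hA : ∀ x y i, 0 < A x y i) :
    ∑ x, ∑ y, p x y * ∑ i, W i * Real.log (A x y i) ≤
      mutualInfo p + ∑ x, ∑ y, (∑ y', p x y') * (∑ x', p x' y) * ∑ i, W i * A x y i - 1 := by
  have hpX (x : X) (y : Y) : 0 < ∑ y', p x y' := sum_pos (fun y' _ => hp x y') ⟨y, mem_univ y⟩
  have hpY (x : X) (y : Y) : 0 < ∑ x', p x' y := sum_pos (fun x' _ => hp x' y) ⟨x, mem_univ x⟩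
  calc ∑ x, ∑ y, p x y * ∑ i, W i * Real.log (A x y i)
      ≤ ∑ x, ∑ y, p x y * (Real.log (p x y / ((∑ y', p x y') * (∑ x', p x' y))) +
          (∑ i, W i * A x y i) / (p x y / ((∑ y', p x y') * (∑ x', p x' y))) - 1) :=
        sum_le_sum fun x _ => sum_le_sum fun y _ => mul_le_mul_of_nonneg_left
          (sum_mul_log_le_log_add_div_sub_one hW0 hW1 (hA x y)
            (div_pos (hp x y) (mul_pos (hpX x y) (hpY x y)))) (hp x y).le
    _ = ∑ x, ∑ y, (p x y * Real.log (p x y / ((∑ y', p x y') * (∑ x', p x' y))) +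
          (∑ y', p x y') * (∑ x', p x' y) * (∑ i, W i * A x y i) - p x y) := by
        refine sum_congr rfl fun x _ => sum_congr rfl fun y _ => ?_
        field_simp [(hp x y).ne', (hpX x y).ne', (hpY x y).ne']
    _ = _ := by simp only [sum_add_distrib, sum_sub_distrib, hp1, mutualInfo]

theorem Fintype.sum_comp_perm_pi {ι X M : Type*} [Fintype ι] [DecidableEq ι] [Fintype X]
    [AddCommMonoid M] (G : (ι → X) → M) (σ : Equiv.Perm ι) :
    ∑ u : ι → X, G (u ∘ σ) = ∑ u, G u :=
  (σ.symm.arrowCongr (Equiv.refl X)).sum_comp G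

theorem sum_prod_eq_one {ι X : Type*} [Fintype ι] [DecidableEq ι] [Fintype X] {w : X → ℝ}
    (hw : ∑ x, w x = 1) : ∑ u : ι → X, ∏ j, w (u j) = 1 := by
  rw [← Fintype.prod_sum (fun _ : ι => w), hw, prod_const_one]

theorem sum_prod_mul_div_sum_eq_inv_card {ι X : Type*} [Fintype ι] [DecidableEq ι] [Fintype X]
    {w E : X → ℝ} (hw : ∑ x, w x = 1) (hE : ∀ x, 0 < E x) (i : ι) :
    ∑ u : ι → X, (∏ j, w (u j)) * (E (u i) / ∑ j, E (u j)) = (Fintype.card ι : ℝ)⁻¹ := by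
  set T : ι → ℝ := fun i => ∑ u : ι → X, (∏ j, w (u j)) * (E (u i) / ∑ j, E (u j)) with hT_def
  have exchangeable (i' : ι) : T i' = T i := by
    simp only [hT_def]
    rw [← Fintype.sum_comp_perm_pi _ (Equiv.swap i i')]
    refine sum_congr rfl fun u _ => ?_
    simp only [Function.comp_apply, Equiv.swap_apply_right]
    rw [Equiv.prod_comp (Equiv.swap i i') (fun j => w (u j)),
      Equiv.sum_comp (Equiv.swap i i') (fun j => E (u j))]
  have sum_eq_one : ∑ i', T i' = 1 := by
    rw [hT_def, sum_comm, ← sum_prod_eq_one (ι := ι) hw]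
    refine sum_congr rfl fun u _ => ?_
    have hS : 0 < ∑ j, E (u j) := sum_pos (fun j _ => hE (u j)) ⟨i, mem_univ i⟩
    rw [← mul_sum, ← sum_div, div_self hS.ne', mul_one]
  simp only [exchangeable, sum_const, card_univ, nsmul_eq_mul] at sum_eq_one
  exact eq_inv_of_mul_eq_one_right sum_eq_one

theorem sum_mul_sum_prod_mul_div_mean_eq_one {X : Type*} [Fintype X] {w E : X → ℝ}
    (hw : ∑ x, w x = 1) (hE : ∀ x, 0 < E x) {K : ℕ} (hK : 1 ≤ K) :
    ∑ x, w x * ∑ v : Fin (K - 1) → X,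
      (∏ j, w (v j)) * (E x / ((1 / (K : ℝ)) * (E x + ∑ j, E (v j)))) = 1 := by
  set m := K - 1
  have hKm : K = m + 1 := by omega
  have h := sum_prod_mul_div_sum_eq_inv_card (ι := Fin (m + 1)) hw hE 0
  rw [← (Fin.consEquiv _).sum_comp, Fintype.sum_prod_type] at h
  simp only [Fin.consEquiv_apply, Fin.prod_univ_succ, Fin.sum_univ_succ, Fin.cons_zero,
    Fin.cons_succ, Fintype.card_fin] at h
  calc _ = (K : ℝ) * ∑ x, ∑ v : Fin m → X,
        (w x * ∏ j, w (v j)) * (E x / (E x + ∑ j, E (v j))) := by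
        simp only [mul_sum, one_div, div_mul_eq_div_div_swap, div_inv_eq_mul]
        exact sum_congr rfl fun x _ => sum_congr rfl fun v _ => by ring
    _ = 1 := by rw [h, ← hKm]; exact mul_inv_cancel₀ (by positivity)

theorem infoNCE_lower_bound {X Y : Type} [Fintype X] [Fintype Y]
    (p : X → Y → ℝ) (hp : ∀ x y, 0 < p x y) (hp1 : ∑ x, ∑ y, p x y = 1)
    (f : X → Y → ℝ) (K : ℕ) (hK : 1 ≤ K) :
    ∑ x1, ∑ y1, p x1 y1 *
      (∑ xs : Fin (K - 1) → X,
        (∏ i, (∑ y, p (xs i) y)) *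
        Real.log (Real.exp (f x1 y1) /
          ((1 / (K : ℝ)) *
            (Real.exp (f x1 y1) + ∑ i, Real.exp (f (xs i) y1))))) ≤
      ∑ x, ∑ y, p x y * Real.log (p x y / ((∑ y', p x y') * (∑ x', p x' y))) := by
  have nwj := sum_mul_sum_mul_log_le_mutualInfo_add hp hp1
    (W := fun xs : Fin (K - 1) → X => ∏ i, ∑ y, p (xs i) y)
    (fun xs => prod_nonneg fun i _ => sum_nonneg fun y _ => (hp _ y).le) (sum_prod_eq_one hp1)
    (A := fun x y xs => Real.exp (f x y) /
      ((1 / (K : ℝ)) * (Real.exp (f x y) + ∑ i, Real.exp (f (xs i) y))))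
    (fun x y xs => by positivity)
  have critic_mean : ∑ x, ∑ y, (∑ y', p x y') * (∑ x', p x' y) * ∑ xs : Fin (K - 1) → X,
      (∏ i, ∑ y, p (xs i) y) * (Real.exp (f x y) /
        ((1 / (K : ℝ)) * (Real.exp (f x y) + ∑ i, Real.exp (f (xs i) y)))) = 1 :=
    calc _ = ∑ y, ∑ x', p x' y := by
          rw [sum_comm]
          refine sum_congr rfl fun y _ => ?_
          simp_rw [mul_comm (∑ y', p _ y') (∑ x', p x' y), mul_assoc, ← mul_sum]
          rw [sum_mul_sum_prod_mul_div_mean_eq_one hp1 (fun x => Real.exp_pos (f x y)) hK,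
            mul_one]
      _ = 1 := by rw [sum_comm, hp1]
  rw [mutualInfo] at nwj
  linarith
end
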